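/- arXiv:0910.4200 — 4 statements merged into one kernel-verified Lean document; each statement's English description precedes it below -/
import Mathlib

section
/- Let M be an (n+1)×(n+1) real matrix whose first column is the all-ones vector and whose remaining n columns b_1, ..., b_n are 0/1 vectors, where i_j denotes the number of ones in column b_j. Then (det M)^2 ≤ (n+1)^{1-n} · (∏_{j=1}^n i_j) · (∏_{j=1}^n (n+1-i_j)). -/
/-!
Subtracting `i_j / (n + 1)` times the all-ones first column from column `j` leaves the determinant
unchanged and centres each 0/1 column, whose squared length drops from `i_j` to
`i_j (n + 1 - i_j) / (n + 1)`. Hadamard's inequality for the resulting matrix gives the bound.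
-/

open Finset

namespace Matrix

theorem det_sq_le_prod_sum_sq_fin {m : ℕ} (A : Matrix (Fin m) (Fin m) ℝ) :
    A.det ^ 2 ≤ ∏ j, ∑ i, A i j ^ 2 := by
  have : Fact (Module.finrank ℝ (EuclideanSpace ℝ (Fin m)) = m) := ⟨finrank_euclideanSpace_fin⟩
  let e := EuclideanSpace.basisFun (Fin m) ℝ
  let col : Fin m → EuclideanSpace ℝ (Fin m) := fun j => WithLp.toLp 2 fun i => A i j
  have hdet : e.toBasis.det col = A.det := by
    rw [Module.Basis.det_apply]
    rfl
  have hle : |A.det| ≤ ∏ j, ‖col j‖ := by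
    rw [← hdet, ← e.toBasis.orientation.volumeForm_robust e rfl]
    exact e.toBasis.orientation.abs_volumeForm_apply_le col
  calc A.det ^ 2 = |A.det| ^ 2 := (sq_abs _).symm
    _ ≤ (∏ j, ‖col j‖) ^ 2 := by gcongr
    _ = ∏ j, ∑ i, A i j ^ 2 := by
      simp only [← prod_pow, EuclideanSpace.norm_sq_eq, col, Real.norm_eq_abs, sq_abs]

variable {ι : Type*} [Fintype ι] [DecidableEq ι]

theorem det_sq_le_prod_sum_sq (A : Matrix ι ι ℝ) : A.det ^ 2 ≤ ∏ j, ∑ i, A i j ^ 2 := by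
  let e := Fintype.equivFin ι
  calc A.det ^ 2 = (reindex e e A).det ^ 2 := by rw [det_reindex_self]
    _ ≤ ∏ j, ∑ i, reindex e e A i j ^ 2 := det_sq_le_prod_sum_sq_fin _
    _ = ∏ j, ∑ i, A i j ^ 2 :=
      Fintype.prod_equiv e.symm _ _ fun _ => Fintype.sum_equiv e.symm _ _ fun _ => rfl

theorem det_eq_of_forall_col_eq_smul_add_const {R : Type*} [CommRing R] {A B : Matrix ι ι R}
    (c : ι → R) (k : ι) (hk : c k = 0) (A_eq : ∀ i j, A i j = B i j + c j * B i k) :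
    A.det = B.det := by
  rw [← det_transpose A, ← det_transpose B]
  exact det_eq_of_forall_row_eq_smul_add_const c k hk fun i j => A_eq j i

end Matrix

theorem sum_sub_mean_sq_of_zero_or_one {ι : Type*} [Fintype ι] (b : ι → ℝ)
    (hb : ∀ k, b k = 0 ∨ b k = 1) :
    ∑ k, (b k - (#{k | b k = 1} : ℝ) / Fintype.card ι) ^ 2 =
      #{k | b k = 1} * (Fintype.card ι - #{k | b k = 1}) / Fintype.card ι := by
  have hsum : ∑ k, b k = #{k | b k = 1} := by
    rw [← sum_boole]
    exact sum_congr rfl fun k _ => by rcases hb k with h | h <;> simp [h]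
  set s : ℝ := ((#{k | b k = 1} : ℕ) : ℝ)
  set N : ℝ := ((Fintype.card ι : ℕ) : ℝ) with hN
  have hsq : ∀ k, (b k - s / N) ^ 2 = (1 - 2 * (s / N)) * b k + (s / N) ^ 2 := by
    intro k
    rcases hb k with h | h <;> rw [h] <;> ring
  rw [sum_congr rfl fun k _ => hsq k, sum_add_distrib, ← mul_sum, hsum, sum_const, card_univ,
    nsmul_eq_mul, ← hN]
  rcases isEmpty_or_nonempty ι with hι | hι
  · simp [s, N]
  · have : N ≠ 0 := by positivity
    field_simp
    ring

theorem det_sq_le_prod (n : ℕ) (M : Matrix (Fin (n + 1)) (Fin (n + 1)) ℝ)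
    (hcol0 : ∀ k, M k 0 = 1)
    (h01 : ∀ (j : Fin n) (k : Fin (n + 1)), M k j.succ = 0 ∨ M k j.succ = 1)
    (i : Fin n → ℕ)
    (hi : ∀ j : Fin n, i j = (univ.filter (fun k : Fin (n + 1) => M k j.succ = 1)).card) :
    (M.det) ^ 2 ≤ ((n : ℝ) + 1) ^ ((1 : ℤ) - n) *
      (∏ j : Fin n, (i j : ℝ)) * (∏ j : Fin n, ((n : ℝ) + 1 - i j)) := by
  let c : Fin (n + 1) → ℝ := Fin.cons 0 fun j => -(i j / ((n : ℝ) + 1))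
  let N : Matrix (Fin (n + 1)) (Fin (n + 1)) ℝ := Matrix.of fun k q => M k q + c q
  have hdet : N.det = M.det :=
    Matrix.det_eq_of_forall_col_eq_smul_add_const c 0 rfl fun k q => by simp [N, hcol0]
  have hcol : ∀ j, ∑ k, N k j.succ ^ 2 = i j * ((n : ℝ) + 1 - i j) / ((n : ℝ) + 1) := by
    intro j
    have := sum_sub_mean_sq_of_zero_or_one (fun k => M k j.succ) (h01 j)
    simp only [Fintype.card_fin, Nat.cast_add_one, ← hi j] at this
    simpa [N, c, sub_eq_add_neg] using this
  have hpos : ((n : ℝ) + 1) ≠ 0 := by positivity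
  calc M.det ^ 2 = N.det ^ 2 := by rw [hdet]
    _ ≤ ∏ q, ∑ k, N k q ^ 2 := N.det_sq_le_prod_sum_sq
    _ = ((n : ℝ) + 1) * ∏ j : Fin n, (i j * ((n : ℝ) + 1 - i j) / ((n : ℝ) + 1)) := by
      rw [Fin.prod_univ_succ, prod_congr rfl fun j _ => hcol j]
      simp [N, c, hcol0]
    _ = _ := by
      rw [prod_div_distrib, prod_mul_distrib, prod_const, card_univ, Fintype.card_fin,
        zpow_sub₀ hpos, zpow_one, zpow_natCast]
      field_simp
end

section
/- If ρ(n) denotes the maximal absolute value of the determinant of an n×n matrix with entries in {0,1}, then ρ(n) ≤ 2·((√(n+1))/2)^{n+1}. -/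
/-!
Bordering the 0/1 matrix `A` by a row and a column of ones and replacing each entry `x` of `A`
by `1 - 2x` gives a `±1` matrix of size `n + 1` whose determinant is `(-2)ⁿ det A` (its Schur
complement is `-2A`). Hadamard's bound `|det B| ≤ √m ^ m` for an `m × m` matrix with entries in
`[-1, 1]` follows from AM-GM applied to the eigenvalues of `B Bᵀ`, whose product is `(det B)²`
and whose sum is `tr (B Bᵀ) ≤ m²`.
-/

open Finset

theorem Real.prod_le_mean_pow {ι : Type*} (s : Finset ι) {z : ι → ℝ} (hz : ∀ i ∈ s, 0 ≤ z i) :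
    ∏ i ∈ s, z i ≤ ((∑ i ∈ s, z i) / #s) ^ #s := by
  rcases s.eq_empty_or_nonempty with rfl | hs
  · simp
  have hcard : (0 : ℝ) < #s := by exact_mod_cast hs.card_pos
  have amgm : ∏ i ∈ s, z i ^ (#s : ℝ)⁻¹ ≤ ∑ i ∈ s, (#s : ℝ)⁻¹ * z i :=
    Real.geom_mean_le_arith_mean_weighted s _ z (fun _ _ => by positivity)
      (by simp [hcard.ne']) hz
  have hpow : ∀ i ∈ s, (z i ^ (#s : ℝ)⁻¹) ^ #s = z i := fun i hi => by
    rw [← Real.rpow_natCast, ← Real.rpow_mul (hz i hi), inv_mul_cancel₀ hcard.ne', Real.rpow_one]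
  calc ∏ i ∈ s, z i = (∏ i ∈ s, z i ^ (#s : ℝ)⁻¹) ^ #s := by
        rw [← prod_pow]; exact (prod_congr rfl hpow).symm
    _ ≤ (∑ i ∈ s, (#s : ℝ)⁻¹ * z i) ^ #s :=
        pow_le_pow_left₀ (prod_nonneg fun i hi => Real.rpow_nonneg (hz i hi) _) amgm _
    _ = ((∑ i ∈ s, z i) / #s) ^ #s := by rw [← mul_sum, inv_mul_eq_div]

namespace Matrix

section Hadamard

variable {ι : Type*} [Fintype ι] [DecidableEq ι]

theorem det_sq_le_trace_mul_transpose_div_pow (B : Matrix ι ι ℝ) :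
    B.det ^ 2 ≤ ((B * Bᵀ).trace / Fintype.card ι) ^ Fintype.card ι := by
  have hPSD := posSemidef_self_mul_conjTranspose B
  have hdet : B.det ^ 2 = ∏ i, hPSD.isHermitian.eigenvalues i := by
    simpa [sq, det_mul] using hPSD.isHermitian.det_eq_prod_eigenvalues
  have htr : (B * Bᵀ).trace = ∑ i, hPSD.isHermitian.eigenvalues i := by
    simpa using hPSD.isHermitian.trace_eq_sum_eigenvalues
  rw [hdet, htr]
  exact Real.prod_le_mean_pow _ fun i _ => hPSD.eigenvalues_nonneg i

theorem abs_det_le_sqrt_card_pow {B : Matrix ι ι ℝ} (hB : ∀ i j, |B i j| ≤ 1) :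
    |B.det| ≤ √(Fintype.card ι) ^ Fintype.card ι := by
  set m := Fintype.card ι
  have hdiag : ∀ i, (B * Bᵀ) i i ≤ m := fun i => by
    calc (B * Bᵀ) i i = ∑ j, B i j ^ 2 := by simp [mul_apply, sq]
      _ ≤ ∑ _j : ι, (1 : ℝ) := sum_le_sum fun j _ => by
          simpa using (sq_le_one_iff_abs_le_one _).mpr (hB i j)
      _ = m := by simp [m]
  have htr : (B * Bᵀ).trace / m ≤ m := by
    rcases (Nat.cast_nonneg m : (0 : ℝ) ≤ m).eq_or_lt with hm | hm
    · simp [← hm]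
    rw [div_le_iff₀ hm]
    calc (B * Bᵀ).trace ≤ ∑ _i : ι, (m : ℝ) := sum_le_sum fun i _ => hdiag i
      _ = m * m := by simp [m]
  have htr_nonneg : 0 ≤ (B * Bᵀ).trace / m := by
    simpa using div_nonneg (posSemidef_self_mul_conjTranspose B).trace_nonneg (Nat.cast_nonneg m)
  refine (sq_le_sq₀ (abs_nonneg _) (by positivity)).mp ?_
  calc |B.det| ^ 2 = B.det ^ 2 := sq_abs _
    _ ≤ ((B * Bᵀ).trace / m) ^ m := det_sq_le_trace_mul_transpose_div_pow B
    _ ≤ (m : ℝ) ^ m := pow_le_pow_left₀ htr_nonneg htr m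
    _ = (√(m : ℝ) ^ m) ^ 2 := by
        rw [← pow_mul, mul_comm, pow_mul, Real.sq_sqrt (Nat.cast_nonneg m)]

end Hadamard

section SignBorder

variable {n R : Type*}

def signBorder [Ring R] (A : Matrix n n R) : Matrix (Unit ⊕ n) (Unit ⊕ n) R :=
  fromBlocks 1 (of fun _ _ => 1) (of fun _ _ => 1) (of fun i j => 1 - 2 * A i j)

theorem det_signBorder [Fintype n] [DecidableEq n] [CommRing R] (A : Matrix n n R) :
    (signBorder A).det = (-2) ^ Fintype.card n * A.det := by
  have hschur : (of fun i j => 1 - 2 * A i j) - (of fun (_ : n) (_ : Unit) => (1 : R)) *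
      (of fun (_ : Unit) (_ : n) => (1 : R)) = (-2 : R) • A := by
    ext i j
    simp [mul_apply]
  rw [signBorder.eq_def, det_fromBlocks_one₁₁, hschur, det_smul]

theorem abs_signBorder_le_one {A : Matrix n n ℝ} (h01 : ∀ i j, A i j = 0 ∨ A i j = 1) :
    ∀ i j, |signBorder A i j| ≤ 1 := by
  rintro (i | i) (j | j)
  iterate 3 simp [signBorder]
  rcases h01 i j with h | h <;> norm_num [signBorder, h]

end SignBorder

end Matrix

theorem zero_one_det_bound (n : ℕ) (A : Matrix (Fin n) (Fin n) ℝ)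
    (h01 : ∀ k j, A k j = 0 ∨ A k j = 1) :
    |A.det| ≤ 2 * (Real.sqrt ((n : ℝ) + 1) / 2) ^ (n + 1) := by
  have hborder := Matrix.abs_det_le_sqrt_card_pow (Matrix.abs_signBorder_le_one h01)
  rw [Matrix.det_signBorder, abs_mul, abs_pow, abs_neg, abs_two, Fintype.card_sum,
    Fintype.card_unit, Fintype.card_fin, add_comm 1 n, Nat.cast_succ] at hborder
  have hscale : 2 * (√((n : ℝ) + 1) / 2) ^ (n + 1) = √((n : ℝ) + 1) ^ (n + 1) / 2 ^ n := by
    rw [div_pow, pow_succ (2 : ℝ) n]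
    field_simp
  rw [hscale, le_div_iff₀ (by positivity), mul_comm]
  exact hborder
end

section
/- Let T be an n-dimensional simplex in R^n with i vertices in the hyperplane {x_1 = 0} and n+1-i vertices in the hyperplane {x_1 = 1}, where 1 ≤ i ≤ n. For t ∈ [0,1], let M_t be the intersection of T with the hyperplane {x_1 = t}. Then there exists a constant c ≥ 0, independent of t, such that the (n-1)-dimensional volume of M_t equals c·(1-t)^{i-1}·t^{n-i} for all t ∈ (0,1). -/
/-!
Reorder the vertices so that `w 0` lies at height `0` and `w 1` at height `1`. A convex combination
of the vertices lies at height `t` exactly when its weights on the height-`0` vertices sum to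
`1 - t` and those on the height-`1` vertices sum to `t`. Taking the weights `u` of the remaining
`n - 1` vertices as coordinates, `M_t` is the image, under an affine map whose linear part does not
depend on `t`, of the product `(1 - t) Δ^{i-1} × t Δ^{n-i}` of scaled corner simplices. Its volume
is therefore `|det| · (1 - t)^{i-1} t^{n-i} · vol (Δ^{i-1} × Δ^{n-i})`.
-/

open Finset MeasureTheory
open scoped Pointwise

section SimplexProd

variable {ι : Type*} [Fintype ι] [DecidableEq ι]

/-- `a • Δ × b • Δ` for the corner simplices `Δ = {u ≥ 0, ∑ u ≤ 1}` on `s` and on `sᶜ`. -/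
def simplexProd (s : Finset ι) (a b : ℝ) : Set (ι → ℝ) :=
  {u | (∀ j, 0 ≤ u j) ∧ ∑ j ∈ s, u j ≤ a ∧ ∑ j ∈ sᶜ, u j ≤ b}

theorem image_diagonal_simplexProd (s : Finset ι) {a b : ℝ} (ha : 0 < a) (hb : 0 < b) :
    Matrix.toLin' (Matrix.diagonal fun j => if j ∈ s then a else b) '' simplexProd s 1 1 =
      simplexProd s a b := by
  have hsum (c d : ℝ) (u : ι → ℝ) :
      ∑ j ∈ s, (if j ∈ s then c else d) * u j = c * ∑ j ∈ s, u j ∧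
        ∑ j ∈ sᶜ, (if j ∈ s then c else d) * u j = d * ∑ j ∈ sᶜ, u j := by
    rw [mul_sum, mul_sum]
    exact ⟨sum_congr rfl fun j hj => by rw [if_pos hj],
      sum_congr rfl fun j hj => by rw [if_neg (mem_compl.1 hj)]⟩
  ext u
  simp only [Set.mem_image, Matrix.toLin'_apply, simplexProd, Set.mem_ofPred_eq]
  constructor
  · rintro ⟨y, ⟨hy0, hys, hysc⟩, rfl⟩
    simp only [Matrix.mulVec_diagonal, hsum]
    refine ⟨fun j => mul_nonneg (by split_ifs <;> positivity) (hy0 j), ?_, ?_⟩ <;> nlinarith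
  · rintro ⟨hu0, hus, husc⟩
    refine ⟨fun j => (if j ∈ s then a⁻¹ else b⁻¹) * u j, ⟨fun j => ?_, ?_, ?_⟩, ?_⟩
    · exact mul_nonneg (by split_ifs <;> positivity) (hu0 j)
    · rw [(hsum _ _ _).1, inv_mul_le_iff₀ ha, mul_one]; exact hus
    · rw [(hsum _ _ _).2, inv_mul_le_iff₀ hb, mul_one]; exact husc
    · ext j
      rw [Matrix.mulVec_diagonal, ← mul_assoc]
      split_ifs <;> field_simp

theorem volume_simplexProd (s : Finset ι) {a b : ℝ} (ha : 0 < a) (hb : 0 < b) :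
    volume (simplexProd s a b) =
      ENNReal.ofReal (a ^ #s * b ^ #sᶜ) * volume (simplexProd s 1 1) := by
  rw [← image_diagonal_simplexProd s ha hb, Measure.addHaar_image_linearMap, LinearMap.det_toLin',
    Matrix.det_diagonal, ← prod_mul_prod_compl s, prod_congr rfl fun j hj => if_pos hj,
    prod_congr rfl fun j hj => if_neg (mem_compl.1 hj), prod_const, prod_const,
    abs_of_pos (by positivity)]

theorem volume_simplexProd_one_lt_top (s : Finset ι) : volume (simplexProd s 1 1) < ⊤ := by
  refine Bornology.IsBounded.measure_lt_top ((Metric.isBounded_Icc (0 : ι → ℝ) 1).subset ?_)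
  rintro u ⟨hu0, hus, husc⟩
  refine ⟨hu0, fun j => ?_⟩
  by_cases hj : j ∈ s
  · exact (single_le_sum (fun k _ => hu0 k) hj).trans hus
  · exact (single_le_sum (fun k _ => hu0 k) (mem_compl.2 hj)).trans husc

end SimplexProd

theorem convexHull_range_eq_image_stdSimplex {ι E : Type*} [Fintype ι] [AddCommGroup E]
    [Module ℝ E] (v : ι → E) :
    convexHull ℝ (Set.range v) = Fintype.linearCombination ℝ v '' stdSimplex ℝ ι := by
  classical
  rw [← convexHull_rangle_single_eq_stdSimplex, LinearMap.image_convexHull, ← Set.range_comp]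
  congr 2
  ext i
  simp [Fintype.linearCombination_apply, Pi.single_apply]

theorem sum_smul_eq_add_sum_smul_sub {M : Type*} [AddCommGroup M] [Module ℝ M] {k : ℕ}
    (w : Fin (k + 2) → M) (l : Fin (k + 2) → ℝ) (s : Finset (Fin k)) :
    ∑ i, l i • w i = (l 0 + ∑ j ∈ s, l j.succ.succ) • w 0 + (l 1 + ∑ j ∈ sᶜ, l j.succ.succ) • w 1
      + ∑ j, l j.succ.succ • (w j.succ.succ - if j ∈ s then w 0 else w 1) := by
  have hbase : ∑ j, l j.succ.succ • (if j ∈ s then w 0 else w 1) =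
      (∑ j ∈ s, l j.succ.succ) • w 0 + (∑ j ∈ sᶜ, l j.succ.succ) • w 1 := by
    rw [← sum_add_sum_compl s, sum_smul, sum_smul]
    congr 1 <;> refine sum_congr rfl fun j hj => ?_
    · rw [if_pos hj]
    · rw [if_neg (mem_compl.1 hj)]
  simp only [Fin.sum_univ_succ (n := k + 1), Fin.sum_univ_succ (n := k), Fin.succ_zero_eq_one,
    smul_sub, sum_sub_distrib, hbase]
  module

namespace SimplexSlab

/- The vertices `w 0` (height `0`) and `w 1` (height `1`) are base points; `j : Fin k` stands for
the vertex `w (j + 2)`, whose edge to the base point of the same height spans the section. -/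
variable {k n : ℕ} (w : Fin (k + 2) → Fin (n + 1) → ℝ)

noncomputable def lowerIdx : Finset (Fin k) := {j | w j.succ.succ 0 = 0}

noncomputable def edgeMap : (Fin k → ℝ) →ₗ[ℝ] (Fin n → ℝ) :=
  Fintype.linearCombination ℝ fun j =>
    Fin.tail (w j.succ.succ - if j ∈ lowerIdx w then w 0 else w 1)

variable {w}

theorem sum_smul_eq_cons (hw : ∀ i, w i 0 = 0 ∨ w i 0 = 1) (h0 : w 0 0 = 0) (h1 : w 1 0 = 1)
    (l : Fin (k + 2) → ℝ) :
    ∑ i, l i • w i = Fin.cons (l 1 + ∑ j ∈ (lowerIdx w)ᶜ, l j.succ.succ)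
      ((l 0 + ∑ j ∈ lowerIdx w, l j.succ.succ) • Fin.tail (w 0)
        + (l 1 + ∑ j ∈ (lowerIdx w)ᶜ, l j.succ.succ) • Fin.tail (w 1)
        + edgeMap w fun j => l j.succ.succ) := by
  have hedge : ∀ j, (w j.succ.succ - if j ∈ lowerIdx w then w 0 else w 1) 0 = 0 := by
    intro j
    by_cases hj : j ∈ lowerIdx w
    · simp_all [lowerIdx]
    · have : w j.succ.succ 0 = 1 := (hw _).resolve_left (by simpa [lowerIdx] using hj)
      simp [hj, this, h1]
  rw [sum_smul_eq_add_sum_smul_sub w l (lowerIdx w), ← Fin.cons_self_tail (_ + _ + _)]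
  congr 1
  · simp [h0, h1, hedge]
  · ext p
    simp [Fin.tail, edgeMap, Fintype.linearCombination_apply]

theorem setOf_cons_mem_convexHull_eq (hw : ∀ i, w i 0 = 0 ∨ w i 0 = 1) (h0 : w 0 0 = 0)
    (h1 : w 1 0 = 1) (t : ℝ) :
    {y | Fin.cons t y ∈ convexHull ℝ (Set.range w)} =
      ((1 - t) • Fin.tail (w 0) + t • Fin.tail (w 1)) +ᵥ
        edgeMap w '' simplexProd (lowerIdx w) (1 - t) t := by
  ext y
  simp only [convexHull_range_eq_image_stdSimplex, Fintype.linearCombination_apply,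
    sum_smul_eq_cons hw h0 h1, Set.mem_image, Set.mem_ofPred_eq, Set.mem_vadd_set, Fin.cons_inj]
  have hsum (l : Fin (k + 2) → ℝ) : ∑ i, l i =
      (l 0 + ∑ j ∈ lowerIdx w, l j.succ.succ) + (l 1 + ∑ j ∈ (lowerIdx w)ᶜ, l j.succ.succ) := by
    simpa using sum_smul_eq_add_sum_smul_sub (fun _ => (1 : ℝ)) l (lowerIdx w)
  constructor
  · rintro ⟨l, ⟨hl0, hl1⟩, hβ, rfl⟩
    have hα : l 0 + ∑ j ∈ lowerIdx w, l j.succ.succ = 1 - t := by linarith [hsum l]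
    refine ⟨_, ⟨fun j => l j.succ.succ, ⟨fun j => hl0 _, ?_, ?_⟩, rfl⟩, ?_⟩
    · linarith [hl0 0]
    · linarith [hl0 1]
    · rw [hα, hβ, vadd_eq_add]
  · rintro ⟨_, ⟨u, ⟨hu0, hus, husc⟩, rfl⟩, rfl⟩
    refine ⟨Fin.cons (1 - t - ∑ j ∈ lowerIdx w, u j) (Fin.cons (t - ∑ j ∈ (lowerIdx w)ᶜ, u j) u),
      ⟨?_, ?_⟩, ?_⟩
    · refine Fin.cases (by simpa using hus) (Fin.cases (by simpa using husc) hu0)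
    · simp only [hsum, Fin.cons_zero, Fin.cons_one, Fin.cons_succ]
      ring
    · simp only [Fin.cons_zero, Fin.cons_one, Fin.cons_succ, vadd_eq_add]
      refine ⟨by ring, ?_⟩
      congr 3 <;> ring

theorem exists_volume_setOf_cons_mem_convexHull_eq {m : ℕ} {w : Fin (m + 2) → Fin (m + 1) → ℝ}
    (hw : ∀ i, w i 0 = 0 ∨ w i 0 = 1) (h0 : w 0 0 = 0) (h1 : w 1 0 = 1) :
    ∃ c : ℝ, 0 ≤ c ∧ ∀ t ∈ Set.Ioo (0 : ℝ) 1,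
      volume {y | Fin.cons t y ∈ convexHull ℝ (Set.range w)} =
        ENNReal.ofReal (c * (1 - t) ^ #(lowerIdx w) * t ^ #(lowerIdx w)ᶜ) := by
  refine ⟨|LinearMap.det (edgeMap w)| * (volume (simplexProd (lowerIdx w) 1 1)).toReal,
    by positivity, fun t ⟨ht0, ht1⟩ => ?_⟩
  rw [setOf_cons_mem_convexHull_eq hw h0 h1, measure_vadd, Measure.addHaar_image_linearMap,
    volume_simplexProd _ (sub_pos.2 ht1) ht0, ENNReal.ofReal_mul (by positivity),
    ENNReal.ofReal_mul (by positivity), ENNReal.ofReal_mul (by positivity),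
    ENNReal.ofReal_mul (abs_nonneg _),
    ENNReal.ofReal_toReal (volume_simplexProd_one_lt_top (lowerIdx w)).ne]
  ring

theorem card_lowerIdx_add_one {m : ℕ} {w : Fin (m + 2) → Fin (m + 1) → ℝ} (h0 : w 0 0 = 0)
    (h1 : w 1 0 = 1) : #(lowerIdx w) + 1 = #{i | w i 0 = 0} := by
  rw [Fin.card_filter_univ_succ, if_pos h0, Fin.card_filter_univ_succ, Fin.succ_zero_eq_one,
    if_neg (by simp [h1]), lowerIdx]

end SimplexSlab

theorem Fin.exists_perm_apply_zero_apply_one {n : ℕ} {a b : Fin (n + 2)} (hab : a ≠ b) :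
    ∃ σ : Equiv.Perm (Fin (n + 2)), σ 0 = a ∧ σ 1 = b := by
  refine ⟨Equiv.swap 0 a * Equiv.swap 1 (Equiv.swap 0 a b), ?_, ?_⟩
  · have : Equiv.swap 0 a b ≠ 0 := by simpa [Equiv.swap_apply_eq_iff] using hab.symm
    simp [Equiv.swap_apply_of_ne_of_ne zero_ne_one this.symm]
  · simp

theorem simplex_cross_section_volume_general (m : ℕ) (i : ℕ) (hi1 : 1 ≤ i) (hi2 : i ≤ m + 1)
    (v : Fin (m + 2) → (Fin (m + 1) → ℝ))
    (h01 : ∀ k, v k 0 = 0 ∨ v k 0 = 1)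
    (hcard : (univ.filter (fun k => v k 0 = 0)).card = i) :
    ∃ c : ℝ, 0 ≤ c ∧ ∀ t ∈ Set.Ioo (0 : ℝ) 1,
      volume {y : Fin m → ℝ | Fin.cons t y ∈ convexHull ℝ (Set.range v)}
        = ENNReal.ofReal (c * (1 - t) ^ (i - 1) * t ^ (m + 1 - i)) := by
  obtain ⟨k0, hk0⟩ : ∃ k0, v k0 0 = 0 := by
    simpa [Finset.Nonempty] using card_pos.1 (hcard ▸ hi1 : 0 < #{k | v k 0 = 0})
  obtain ⟨k1, hk1⟩ : ∃ k1, v k1 0 = 1 := by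
    by_contra! h
    have : #{k | v k 0 = 0} = m + 2 := by simp [fun k => (h01 k).resolve_right (h k)]
    omega
  obtain ⟨σ, hσ0, hσ1⟩ := Fin.exists_perm_apply_zero_apply_one (a := k0) (b := k1)
    (by rintro rfl; linarith)
  have hw0 : (v ∘ σ) 0 0 = 0 := by simpa [hσ0]
  have hw1 : (v ∘ σ) 1 0 = 1 := by simpa [hσ1]
  have hcount : #(SimplexSlab.lowerIdx (v ∘ σ)) + 1 = i := by
    rw [SimplexSlab.card_lowerIdx_add_one hw0 hw1, ← hcard]
    exact card_equiv σ (by simp)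
  obtain ⟨c, hc0, hc⟩ :=
    SimplexSlab.exists_volume_setOf_cons_mem_convexHull_eq (w := v ∘ σ) (fun k => h01 (σ k)) hw0 hw1
  refine ⟨c, hc0, fun t ht => ?_⟩
  rw [← σ.surjective.range_comp v, hc t ht, card_compl, Fintype.card_fin, ← hcount,
    Nat.add_sub_cancel, Nat.add_sub_add_right]

/-- Cross-section volume of a simplex between two hyperplanes.
Here the dimension is `n = m + 1` (so `n ≥ 1`); the simplex `T` lives in
`ℝ^n = Fin (m+1) → ℝ`, has `n + 1` vertices `v k`, `i` of which lie in the
hyperplane `x_1 = 0` and the remaining `n + 1 - i` in `x_1 = 1`.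
The cross-section at height `t` is identified with a subset of
`ℝ^{n-1} = Fin m → ℝ` via `y ↦ Fin.cons t y`. -/
theorem simplex_cross_section_volume (m : ℕ) (i : ℕ) (hi1 : 1 ≤ i) (hi2 : i ≤ m + 1)
    (v : Fin (m + 2) → (Fin (m + 1) → ℝ))
    (hv : AffineIndependent ℝ v)
    (h01 : ∀ k, v k 0 = 0 ∨ v k 0 = 1)
    (hcard : (univ.filter (fun k => v k 0 = 0)).card = i) :
    ∃ c : ℝ, 0 ≤ c ∧ ∀ t ∈ Set.Ioo (0 : ℝ) 1,
      volume {y : Fin m → ℝ | Fin.cons t y ∈ convexHull ℝ (Set.range v)}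
        = ENNReal.ofReal (c * (1 - t) ^ (i - 1) * t ^ (m + 1 - i)) :=
  simplex_cross_section_volume_general m i hi1 hi2 v h01 hcard
end

section
/- Define E(n) = n!/(2·((√(n+1))/2)^{n+1}) and F(n) = (n+1)^{(n-1)/2}. Then the limit as n → ∞ of (F(n)/E(n))^{1/n} equals e/2. -/
/-!
After simplification `F(n)/E(n) = (n+1)^n / (2^n n!)`, so `log (F(n)/E(n)) / n` equals
`log (n+1) - log 2 - log n! / n`. By Stirling's formula `log n! = n log n - n + O(log n)`,
hence `log n! / n - log n → -1`, and the whole expression tends to `1 - log 2`.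
-/

open Filter Real Topology

lemma tendsto_rpow_one_div_of_tendsto_log_div {a : ℕ → ℝ} {L : ℝ} (ha : ∀ n, 0 < a n)
    (h : Tendsto (fun n : ℕ => log (a n) / n) atTop (𝓝 L)) :
    Tendsto (fun n : ℕ => a n ^ ((1 : ℝ) / n)) atTop (𝓝 (exp L)) := by
  refine ((continuous_exp.tendsto L).comp h).congr fun n => ?_
  rw [Function.comp_apply, rpow_def_of_pos (ha n), mul_one_div]

lemma log_factorial_div_sub_log_eq {n : ℕ} (hn : n ≠ 0) :
    log n.factorial / n - log n
      = log (Stirling.stirlingSeq n) / n + log (2 * n) / (2 * n) - 1 := by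
  have hn' : (n : ℝ) ≠ 0 := Nat.cast_ne_zero.mpr hn
  rw [Stirling.log_stirlingSeq_formula, log_div hn' (exp_ne_zero 1), log_exp]
  field_simp
  ring

lemma tendsto_log_factorial_div_sub_log :
    Tendsto (fun n : ℕ => log n.factorial / n - log n) atTop (𝓝 (-1)) := by
  have h_stirling : Tendsto (fun n : ℕ => log (Stirling.stirlingSeq n) / n) atTop (𝓝 0) :=
    ((continuousAt_log (by positivity)).tendsto.comp Stirling.tendsto_stirlingSeq_sqrt_pi).div_atTop
      tendsto_natCast_atTop_atTop
  have h_log : Tendsto (fun n : ℕ => log (2 * n) / (2 * n)) atTop (𝓝 0) := by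
    simpa [Function.comp_def] using (tendsto_pow_log_div_mul_add_atTop 1 0 1 one_ne_zero).comp
      (tendsto_natCast_atTop_atTop.const_mul_atTop two_pos)
  have := (h_stirling.add h_log).sub_const 1
  rw [zero_add, zero_sub] at this
  exact this.congr' <| (eventually_ne_atTop 0).mono fun n hn =>
    (log_factorial_div_sub_log_eq hn).symm

lemma ratio_of_bounds_eq (n : ℕ) :
    ((n : ℝ) + 1) ^ (((n : ℝ) - 1) / 2)
        / (n.factorial / (2 * (√((n : ℝ) + 1) / 2) ^ (n + 1)))
      = ((n : ℝ) + 1) ^ n / (2 ^ n * n.factorial) := by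
  have hpos : (0 : ℝ) < n + 1 := by positivity
  have h_sqrt : √((n : ℝ) + 1) ^ (n + 1) = ((n : ℝ) + 1) ^ (((n : ℝ) + 1) / 2) := by
    rw [sqrt_eq_rpow, ← rpow_natCast, ← rpow_mul hpos.le]
    push_cast
    ring_nf
  have h_split : ((n : ℝ) + 1) ^ n
      = ((n : ℝ) + 1) ^ (((n : ℝ) - 1) / 2) * ((n : ℝ) + 1) ^ (((n : ℝ) + 1) / 2) := by
    rw [← rpow_add hpos, ← rpow_natCast]
    ring_nf
  have : ((n : ℝ) + 1) ^ (((n : ℝ) + 1) / 2) ≠ 0 := (rpow_pos_of_pos hpos _).ne'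
  rw [div_pow, h_sqrt, h_split, pow_succ]
  field_simp

lemma log_ratio_of_bounds_div_eq {n : ℕ} (hn : n ≠ 0) :
    log (((n : ℝ) + 1) ^ n / (2 ^ n * n.factorial)) / n
      = (log (n + 1) - log n) - log 2 - (log n.factorial / n - log n) := by
  have hn' : (n : ℝ) ≠ 0 := Nat.cast_ne_zero.mpr hn
  rw [log_div (by positivity) (by positivity), log_mul (by positivity) (by positivity),
    log_pow, log_pow]
  field_simp
  ring

/-- Comparison of the new bound `F(n) = (n+1)^{(n-1)/2}` with the Euclidean
bound `E(n) = n!/(2(√(n+1)/2)^{n+1})`: `(F(n)/E(n))^{1/n} → e/2`. -/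
theorem ratio_of_bounds_tendsto_e_div_two :
    Filter.Tendsto
      (fun n : ℕ =>
        ((((n : ℝ) + 1) ^ (((n : ℝ) - 1) / 2)) /
            ((Nat.factorial n : ℝ) / (2 * (Real.sqrt ((n : ℝ) + 1) / 2) ^ (n + 1))))
          ^ ((1 : ℝ) / n))
      Filter.atTop (nhds (Real.exp 1 / 2)) := by
  simp_rw [ratio_of_bounds_eq]
  have h_log : Tendsto (fun n : ℕ => log (((n : ℝ) + 1) ^ n / (2 ^ n * n.factorial)) / n)
      atTop (𝓝 (1 - log 2)) := by
    have := (tendsto_log_nat_add_one_sub_log.sub_const (log 2)).sub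
      tendsto_log_factorial_div_sub_log
    rw [zero_sub, sub_neg_eq_add, neg_add_eq_sub] at this
    exact this.congr' <| (eventually_ne_atTop 0).mono fun n hn =>
      (log_ratio_of_bounds_div_eq hn).symm
  have h_exp : exp (1 - log 2) = exp 1 / 2 := by rw [exp_sub, exp_log two_pos]
  rw [← h_exp]
  exact tendsto_rpow_one_div_of_tendsto_log_div (fun n => by positivity) h_log
end
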